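/- arXiv:2103.14821 — 7 statements merged into one kernel-verified Lean document; each statement's English description precedes it below -/
import Mathlib

section
/- Let x : ℝ → ℝ² be differentiable and satisfy the nonlinear system dynamics ẋ(t) = g₁(x(t)) + g₂(x(t))·u(t) + z·d(t), where g₁, g₂ : ℝ² → ℝ², u, d : ℝ → ℝ, and z ∈ ℝ². Let l_p ∈ ℝ² with ⟨l_p, z⟩ a scalar, let p : ℝ → ℝ be differentiable and satisfy the basic nonlinear disturbance observer dynamics ṗ(t) = −⟨l_p,z⟩·p(t) − (⟨l_p,z⟩·⟨l_p,x(t)⟩ + ⟨l_p, g₁(x(t)) + g₂(x(t))·u(t)⟩), and define the estimated disturbance d̂(t) = p(t) + ⟨l_p, x(t)⟩. Then the estimate satisfies d̂'(t) = ⟨l_p,z⟩·(d(t) − d̂(t)) for all t; consequently, if d is differentiable, the disturbance error e_d(t) = d(t) − d̂(t) satisfies e_d'(t) = −⟨l_p,z⟩·e_d(t) + d'(t). -/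
open scoped RealInnerProductSpace

/-!
Along a trajectory, `⟪l, x⟫` has derivative `⟪l, f⟫ + ⟪l, z⟫ d`, where `f = g₁(x) + g₂(x) u` is the
known part of the vector field. The observer's `ṗ` cancels `⟪l, f⟫` exactly and feeds back
`-⟪l, z⟫ (p + ⟪l, x⟫)`, so only `⟪l, z⟫ (d - d̂)` survives in `d̂'`. The error equation follows by
subtracting this from `d'`.
-/

section

variable {E : Type*} [NormedAddCommGroup E] [InnerProductSpace ℝ E]

theorem HasDerivAt.inner_const_left {x : ℝ → E} {x' : E} {t : ℝ} (l : E)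
    (hx : HasDerivAt x x' t) : HasDerivAt (fun t => ⟪l, x t⟫) ⟪l, x'⟫ t :=
  (innerSL ℝ l).hasFDerivAt.comp_hasDerivAt t hx

theorem hasDerivAt_disturbance_estimate {x f : ℝ → E} {p d : ℝ → ℝ} {z l : E} {t : ℝ}
    (hx : HasDerivAt x (f t + d t • z) t)
    (hp : HasDerivAt p (-⟪l, z⟫ * p t - (⟪l, z⟫ * ⟪l, x t⟫ + ⟪l, f t⟫)) t) :
    HasDerivAt (fun t => p t + ⟪l, x t⟫) (⟪l, z⟫ * (d t - (p t + ⟪l, x t⟫))) t := by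
  refine (hp.add (hx.inner_const_left l)).congr_deriv ?_
  rw [inner_add_right, inner_smul_right]
  ring

end

theorem hasDerivAt_estimation_error {d dhat : ℝ → ℝ} {c d' t : ℝ}
    (hdhat : HasDerivAt dhat (c * (d t - dhat t)) t) (hd : HasDerivAt d d' t) :
    HasDerivAt (fun t => d t - dhat t) (-c * (d t - dhat t) + d') t :=
  (hd.sub hdhat).congr_deriv (by ring)

/-- BNDO estimate dynamics.  For a system
`ẋ = g₁(x) + g₂(x)·u + z·d` and observer
`ṗ = −⟨l_p,z⟩p − (⟨l_p,z⟩⟨l_p,x⟩ + ⟨l_p, g₁(x)+g₂(x)u⟩)`, the estimate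
`d̂ = p + ⟨l_p,x⟩` satisfies `d̂' = ⟨l_p,z⟩(d − d̂)`, and if `d` is
differentiable then the error `e_d = d − d̂` satisfies
`e_d' = −⟨l_p,z⟩ e_d + d'`. -/
theorem bndo_estimate_dynamics
    (x : ℝ → EuclideanSpace ℝ (Fin 2)) (g₁ g₂ : EuclideanSpace ℝ (Fin 2) → EuclideanSpace ℝ (Fin 2))
    (u d : ℝ → ℝ) (z l_p : EuclideanSpace ℝ (Fin 2)) (p : ℝ → ℝ)
    (hx : ∀ t, HasDerivAt x (g₁ (x t) + u t • g₂ (x t) + d t • z) t)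
    (hp : ∀ t, HasDerivAt p
      (-(⟪l_p, z⟫ : ℝ) * p t -
        ((⟪l_p, z⟫ : ℝ) * (⟪l_p, x t⟫ : ℝ) + (⟪l_p, g₁ (x t) + u t • g₂ (x t)⟫ : ℝ))) t) :
    (∀ t, HasDerivAt (fun t => p t + (⟪l_p, x t⟫ : ℝ))
        ((⟪l_p, z⟫ : ℝ) * (d t - (p t + (⟪l_p, x t⟫ : ℝ)))) t) ∧
    (Differentiable ℝ d →
      ∀ t, HasDerivAt (fun t => d t - (p t + (⟪l_p, x t⟫ : ℝ)))
        (-(⟪l_p, z⟫ : ℝ) * (d t - (p t + (⟪l_p, x t⟫ : ℝ))) + deriv d t) t) := by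
  have hestimate t := hasDerivAt_disturbance_estimate (f := fun t => g₁ (x t) + u t • g₂ (x t))
    (hx t) (hp t)
  exact ⟨hestimate, fun hd t => hasDerivAt_estimation_error (hestimate t) (hd t).hasDerivAt⟩
end

section
/- Let ξ, c, σ, φ : ℝ → ℝ be differentiable with σ(t) ≠ 0 and ξ(t) − c(t) ≠ 0 for all t, and let φ(t) be any function (the signal α·sgn(s) of the learning algorithm). Suppose the sliding-mode adaptation rules hold: c'(t) = ξ'(t) + (ξ(t) − c(t))·φ(t) and σ'(t) = −(σ(t) + σ(t)³/(ξ(t) − c(t))²)·φ(t). Define N(t) = (ξ(t) − c(t))/σ(t) and the Gaussian membership value μ(t) = exp(−N(t)²). Then for all t: N(t)·N'(t) = φ(t), μ'(t) = −2·φ(t)·μ(t), and consequently for two such membership values μ₁, μ₂ (each built from its own ξ, c, σ obeying the same rules with the same φ), the firing strength w = μ₁·μ₂ satisfies w'(t) = −4·φ(t)·w(t). -/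
/-!
Write `u = ξ - c` and `N = u / σ`. The center rule says exactly `u' = -u φ`, and the width rule
is tuned so that in `N' = (u' σ - u σ') / σ²` the terms `∓ u σ φ` cancel, leaving
`N' = (σ / u) φ = φ / N`. Hence `N N' = φ`, so `d/dt exp (-N²) = -2 N N' exp (-N²) = -2 φ μ`,
and a product of two memberships with the same exponential rate `-2 φ` has rate `-4 φ`.
-/

open Real

section

variable {φ ξ c σ u v f g : ℝ → ℝ} {t : ℝ}

theorem hasDerivAt_sub_of_center_rule (hξ : DifferentiableAt ℝ ξ t) (hc : DifferentiableAt ℝ c t)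
    (hc' : deriv c t = deriv ξ t + (ξ t - c t) * φ t) :
    HasDerivAt (fun t => ξ t - c t) (-(ξ t - c t) * φ t) t :=
  (hξ.hasDerivAt.sub hc.hasDerivAt).congr_deriv (by rw [hc']; ring)

theorem hasDerivAt_div_of_width_rule (hu : HasDerivAt u (-u t * φ t) t)
    (hv : HasDerivAt v (-(v t + v t ^ 3 / u t ^ 2) * φ t) t) (hu0 : u t ≠ 0) (hv0 : v t ≠ 0) :
    HasDerivAt (fun t => u t / v t) (v t / u t * φ t) t :=
  (hu.div hv hv0).congr_deriv (by field_simp; ring)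

theorem hasDerivAt_normalized_of_smc_rules (hξ : DifferentiableAt ℝ ξ t)
    (hc : DifferentiableAt ℝ c t) (hσ : DifferentiableAt ℝ σ t) (hσ0 : σ t ≠ 0)
    (hne : ξ t - c t ≠ 0) (hc' : deriv c t = deriv ξ t + (ξ t - c t) * φ t)
    (hσ' : deriv σ t = -(σ t + σ t ^ 3 / (ξ t - c t) ^ 2) * φ t) :
    HasDerivAt (fun t => (ξ t - c t) / σ t) (σ t / (ξ t - c t) * φ t) t :=
  hasDerivAt_div_of_width_rule (hasDerivAt_sub_of_center_rule hξ hc hc')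
    (hσ' ▸ hσ.hasDerivAt) hne hσ0

theorem HasDerivAt.exp_neg_sq {N : ℝ → ℝ} {N' : ℝ} (hN : HasDerivAt N N' t) :
    HasDerivAt (fun t => Real.exp (-N t ^ 2)) (-2 * (N t * N') * Real.exp (-N t ^ 2)) t :=
  ((hN.pow 2).neg.exp).congr_deriv (by simp only [Pi.neg_apply, Pi.pow_apply]; ring)

theorem hasDerivAt_membership_of_smc_rules (hξ : DifferentiableAt ℝ ξ t)
    (hc : DifferentiableAt ℝ c t) (hσ : DifferentiableAt ℝ σ t) (hσ0 : σ t ≠ 0)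
    (hne : ξ t - c t ≠ 0) (hc' : deriv c t = deriv ξ t + (ξ t - c t) * φ t)
    (hσ' : deriv σ t = -(σ t + σ t ^ 3 / (ξ t - c t) ^ 2) * φ t) :
    HasDerivAt (fun t => exp (-((ξ t - c t) / σ t) ^ 2))
      (-2 * φ t * exp (-((ξ t - c t) / σ t) ^ 2)) t := by
  have hN := hasDerivAt_normalized_of_smc_rules hξ hc hσ hσ0 hne hc' hσ'
  have hNN' : (ξ t - c t) / σ t * (σ t / (ξ t - c t) * φ t) = φ t := by field_simp
  simpa only [hNN'] using hN.exp_neg_sq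

theorem HasDerivAt.mul_of_exp_rate {a b : ℝ} (hf : HasDerivAt f (a * f t) t)
    (hg : HasDerivAt g (b * g t) t) :
    HasDerivAt (fun t => f t * g t) ((a + b) * (f t * g t)) t :=
  (hf.mul hg).congr_deriv (by ring)

end

/-- under the SMC adaptation rules
`c' = ξ' + (ξ−c)·φ` and `σ' = −(σ + σ³/(ξ−c)²)·φ` (with `φ = α·sgn(s)`),
the normalized argument `N = (ξ−c)/σ` satisfies `N·N' = φ`, the Gaussian
membership value `μ = exp(−N²)` satisfies `μ' = −2·φ·μ`, and the firing
strength `w = μ₁·μ₂` of two such membership values satisfies `w' = −4·φ·w`. -/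
theorem smc_membership_dynamics
    (φ : ℝ → ℝ)
    (ξ₁ c₁ σ₁ ξ₂ c₂ σ₂ : ℝ → ℝ)
    (hξ₁ : Differentiable ℝ ξ₁) (hc₁ : Differentiable ℝ c₁) (hσ₁ : Differentiable ℝ σ₁)
    (hξ₂ : Differentiable ℝ ξ₂) (hc₂ : Differentiable ℝ c₂) (hσ₂ : Differentiable ℝ σ₂)
    (hσ₁0 : ∀ t, σ₁ t ≠ 0) (hne₁ : ∀ t, ξ₁ t - c₁ t ≠ 0)
    (hσ₂0 : ∀ t, σ₂ t ≠ 0) (hne₂ : ∀ t, ξ₂ t - c₂ t ≠ 0)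
    (hc₁' : ∀ t, deriv c₁ t = deriv ξ₁ t + (ξ₁ t - c₁ t) * φ t)
    (hσ₁' : ∀ t, deriv σ₁ t = -(σ₁ t + (σ₁ t) ^ 3 / (ξ₁ t - c₁ t) ^ 2) * φ t)
    (hc₂' : ∀ t, deriv c₂ t = deriv ξ₂ t + (ξ₂ t - c₂ t) * φ t)
    (hσ₂' : ∀ t, deriv σ₂ t = -(σ₂ t + (σ₂ t) ^ 3 / (ξ₂ t - c₂ t) ^ 2) * φ t) :
    (∀ t, ((ξ₁ t - c₁ t) / σ₁ t) * deriv (fun t => (ξ₁ t - c₁ t) / σ₁ t) t = φ t) ∧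
    (∀ t, HasDerivAt (fun t => Real.exp (-((ξ₁ t - c₁ t) / σ₁ t) ^ 2))
        (-2 * φ t * Real.exp (-((ξ₁ t - c₁ t) / σ₁ t) ^ 2)) t) ∧
    (∀ t, HasDerivAt
        (fun t => Real.exp (-((ξ₁ t - c₁ t) / σ₁ t) ^ 2) *
                  Real.exp (-((ξ₂ t - c₂ t) / σ₂ t) ^ 2))
        (-4 * φ t * (Real.exp (-((ξ₁ t - c₁ t) / σ₁ t) ^ 2) *
                     Real.exp (-((ξ₂ t - c₂ t) / σ₂ t) ^ 2))) t) := by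
  have hμ₁ t := hasDerivAt_membership_of_smc_rules (hξ₁ t) (hc₁ t) (hσ₁ t) (hσ₁0 t) (hne₁ t)
    (hc₁' t) (hσ₁' t)
  have hμ₂ t := hasDerivAt_membership_of_smc_rules (hξ₂ t) (hc₂ t) (hσ₂ t) (hσ₂0 t) (hne₂ t)
    (hc₂' t) (hσ₂' t)
  refine ⟨fun t => ?_, hμ₁, fun t => ?_⟩
  · have hN := hasDerivAt_normalized_of_smc_rules (hξ₁ t) (hc₁ t) (hσ₁ t) (hσ₁0 t) (hne₁ t)
      (hc₁' t) (hσ₁' t)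
    rw [hN.deriv]
    field_simp [hne₁ t, hσ₁0 t]
  · exact ((hμ₁ t).mul_of_exp_rate (hμ₂ t)).congr_deriv (by ring)
end

section
/- Let K be a finite nonempty index set; let u_k, v_k ∈ (0,1] for k ∈ K with Σ_k u_k = 1 and Σ_k v_k = 1; let f_k, q, α, S ∈ ℝ. Assume D₁ := Σ_k (q·u_k + (1−q)·v_k)² > 0 and D₂ := Σ_k f_k·(u_k − v_k) ≠ 0. Define ḟ_k = −((q·u_k + (1−q)·v_k)/D₁)·α·S and q̇ = −(α·S)/D₂. Then q·Σ_k ḟ_k·u_k + (1−q)·Σ_k ḟ_k·v_k + q̇·Σ_k f_k·(u_k − v_k) + 4αS·[ q·Σ_k f_k·(−u_k + u_k·Σ_l u_l) + (1−q)·Σ_k f_k·(−v_k + v_k·Σ_l v_l) ] = −2·α·S. That is, under the adaptation rules for the consequent parameters f_k and the weighting parameter q, the time derivative of the T2NFS output τ_n = q·Σ_k f_k·u_k + (1−q)·Σ_k f_k·v_k equals −2α·sgn(s). -/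
/-! Both firing-strength families enter the consequent term only through the combined strength
`w = q·u + (1 - q)·v`, and the consequent update is the normalised step `-(w / ‖w‖²)·α·S`, which
contributes exactly `-α·S`. The update of `q` divides out `∑ f_k (u_k - v_k)` and contributes
another `-α·S`, while the `4αS` term vanishes because each family sums to `1`. -/

open Finset

section

variable {K : Type*} [Fintype K]

theorem mul_sum_add_one_sub_mul_sum (g u v : K → ℝ) (q : ℝ) :
    q * ∑ k, g k * u k + (1 - q) * ∑ k, g k * v k =
      ∑ k, g k * (q * u k + (1 - q) * v k) := by
  simp only [mul_sum, ← sum_add_distrib]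
  exact sum_congr rfl fun k _ => by ring

theorem sum_neg_div_sum_sq_mul_mul_mul_self (w : K → ℝ) (a b : ℝ) (hw : ∑ l, w l ^ 2 ≠ 0) :
    ∑ k, -(w k / ∑ l, w l ^ 2) * a * b * w k = -(a * b) := by
  have hterm : ∀ k, -(w k / ∑ l, w l ^ 2) * a * b * w k = -(a * b) / (∑ l, w l ^ 2) * w k ^ 2 :=
    fun k => by ring
  rw [sum_congr rfl fun k _ => hterm k, ← mul_sum, div_mul_cancel₀ _ hw]

theorem sum_mul_neg_add_mul_sum_eq_zero (f u : K → ℝ) (hu : ∑ l, u l = 1) :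
    ∑ k, f k * (-(u k) + u k * ∑ l, u l) = 0 := by
  simp [hu]

end

theorem t2nfs_output_derivative_general
    {K : Type*} [Fintype K]
    (u v f : K → ℝ) (q α S : ℝ)
    (hus : ∑ k, u k = 1) (hvs : ∑ k, v k = 1)
    (hD₁ : 0 < ∑ k, (q * u k + (1 - q) * v k) ^ 2)
    (hD₂ : ∑ k, f k * (u k - v k) ≠ 0) :
    q * (∑ k, (-((q * u k + (1 - q) * v k) /
            (∑ l, (q * u l + (1 - q) * v l) ^ 2)) * α * S) * u k) +
      (1 - q) * (∑ k, (-((q * u k + (1 - q) * v k) /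
            (∑ l, (q * u l + (1 - q) * v l) ^ 2)) * α * S) * v k) +
      (-(α * S) / (∑ k, f k * (u k - v k))) * (∑ k, f k * (u k - v k)) +
      4 * α * S *
        (q * (∑ k, f k * (-(u k) + u k * ∑ l, u l)) +
          (1 - q) * (∑ k, f k * (-(v k) + v k * ∑ l, v l))) =
      -2 * α * S := by
  rw [mul_sum_add_one_sub_mul_sum, sum_neg_div_sum_sq_mul_mul_mul_self _ α S hD₁.ne',
    div_mul_cancel₀ _ hD₂, sum_mul_neg_add_mul_sum_eq_zero f u hus,
    sum_mul_neg_add_mul_sum_eq_zero f v hvs]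
  ring

/-- algebraic identity behind `τ̇_n = −2α·sgn(s)`.  With normalized
lower/upper firing strengths `u_k, v_k ∈ (0,1]` each summing to `1`, the
adaptation rules for the consequents `f_k` and the weight `q` make the time
derivative of the T2NFS output equal `−2αS`. -/
theorem t2nfs_output_derivative
    {K : Type*} [Fintype K] [Nonempty K]
    (u v f : K → ℝ) (q α S : ℝ)
    (hu : ∀ k, u k ∈ Set.Ioc (0 : ℝ) 1) (hv : ∀ k, v k ∈ Set.Ioc (0 : ℝ) 1)
    (hus : ∑ k, u k = 1) (hvs : ∑ k, v k = 1)
    (hD₁ : 0 < ∑ k, (q * u k + (1 - q) * v k) ^ 2)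
    (hD₂ : ∑ k, f k * (u k - v k) ≠ 0) :
    q * (∑ k, (-((q * u k + (1 - q) * v k) /
            (∑ l, (q * u l + (1 - q) * v l) ^ 2)) * α * S) * u k) +
      (1 - q) * (∑ k, (-((q * u k + (1 - q) * v k) /
            (∑ l, (q * u l + (1 - q) * v l) ^ 2)) * α * S) * v k) +
      (-(α * S) / (∑ k, f k * (u k - v k))) * (∑ k, f k * (u k - v k)) +
      4 * α * S *
        (q * (∑ k, f k * (-(u k) + u k * ∑ l, u l)) +
          (1 - q) * (∑ k, f k * (-(v k) + v k * ∑ l, v l))) =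
      -2 * α * S :=
  t2nfs_output_derivative_general u v f q α S hus hvs hD₁ hD₂
end

section
/- Let γ > 0, α* > 0 and R, D ≥ 0 be real constants with α* > R + D. Let τ_c, α, w_r, w_d : [0,∞) → ℝ with τ_c, α differentiable, |w_r(t)| ≤ R and |w_d(t)| ≤ D for all t, and suppose the closed-loop learning dynamics hold: τ_c'(t) = −2·α(t)·sgn(τ_c(t)) − w_r(t) + w_d(t) and α'(t) = γ·|τ_c(t)|, where sgn is the standard sign function (sgn(0)=0). Define the Lyapunov function V(t) = ½·τ_c(t)² + (1/γ)·(α(t) − α*)². Then V is differentiable and V'(t) ≤ |τ_c(t)|·(R + D − 2·α*) ≤ 0 for all t; in particular V'(t) < 0 whenever τ_c(t) ≠ 0. -/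
/-!
Along the closed loop, `V' = τ_c τ_c' + (2/γ)(α - α*) α'`. Substituting the dynamics, the
learning term `-2α τ_c sgn τ_c = -2α|τ_c|` cancels against `(2/γ)α·γ|τ_c|` from the adaptation
law, leaving `V' = τ_c (w_d - w_r) - 2α*|τ_c| ≤ |τ_c| (R + D - 2α*)`, which is nonpositive since
`R + D < α*` and `α* > 0`.
-/

theorem Real.self_mul_sign (x : ℝ) : x * Real.sign x = |x| := by
  rcases lt_trichotomy x 0 with hx | rfl | hx
  · rw [Real.sign_of_neg hx, abs_of_neg hx, mul_neg_one]
  · simp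
  · rw [Real.sign_of_pos hx, abs_of_pos hx, mul_one]

theorem mul_sub_le_abs_mul_add {x a b R D : ℝ} (ha : |a| ≤ R) (hb : |b| ≤ D) :
    x * (b - a) ≤ |x| * (R + D) :=
  calc x * (b - a) ≤ |x| * |b - a| := (le_abs_self _).trans (abs_mul _ _).le
    _ ≤ |x| * (R + D) := by
      gcongr
      calc |b - a| ≤ |b| + |a| := abs_sub _ _
        _ ≤ R + D := by linarith

noncomputable def lyapunov (γ αs : ℝ) (τc α : ℝ → ℝ) (t : ℝ) : ℝ :=
  (1 / 2) * (τc t) ^ 2 + (1 / γ) * (α t - αs) ^ 2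

section Lyapunov

variable {γ αs : ℝ} {τc α : ℝ → ℝ} {t : ℝ}

theorem hasDerivAt_lyapunov {τ' α' : ℝ} (hτc : HasDerivAt τc τ' t) (hα : HasDerivAt α α' t) :
    HasDerivAt (lyapunov γ αs τc α) (τc t * τ' + 2 / γ * (α t - αs) * α') t := by
  refine (((hτc.pow 2).const_mul (1 / 2 : ℝ)).add
    (((hα.sub_const αs).pow 2).const_mul (1 / γ))).congr_deriv ?_
  push_cast
  ring

theorem hasDerivAt_lyapunov_of_dynamics (hγ : γ ≠ 0) {wr wd : ℝ}
    (hτc : HasDerivAt τc (-2 * α t * Real.sign (τc t) - wr + wd) t)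
    (hα : HasDerivAt α (γ * |τc t|) t) :
    HasDerivAt (lyapunov γ αs τc α) (τc t * (wd - wr) - 2 * αs * |τc t|) t := by
  convert hasDerivAt_lyapunov hτc hα using 1
  field_simp
  linear_combination (2 * α t) * Real.self_mul_sign (τc t)

end Lyapunov

theorem learning_algorithm_lyapunov_general
    (γ αs R D : ℝ) (hγ : 0 < γ) (hαs : 0 < αs)
    (hgain : R + D < αs)
    (τc α wr wd : ℝ → ℝ)
    (hτc_diff : Differentiable ℝ τc) (hα_diff : Differentiable ℝ α)
    (hwr : ∀ t, |wr t| ≤ R) (hwd : ∀ t, |wd t| ≤ D)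
    (hτc' : ∀ t, deriv τc t = -2 * α t * Real.sign (τc t) - wr t + wd t)
    (hα' : ∀ t, deriv α t = γ * |τc t|) :
    ∀ t, DifferentiableAt ℝ (fun t => (1 / 2) * (τc t) ^ 2 + (1 / γ) * (α t - αs) ^ 2) t ∧
      deriv (fun t => (1 / 2) * (τc t) ^ 2 + (1 / γ) * (α t - αs) ^ 2) t ≤
        |τc t| * (R + D - 2 * αs) ∧
      |τc t| * (R + D - 2 * αs) ≤ 0 ∧
      (τc t ≠ 0 →
        deriv (fun t => (1 / 2) * (τc t) ^ 2 + (1 / γ) * (α t - αs) ^ 2) t < 0) := by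
  intro t
  have hV : HasDerivAt (lyapunov γ αs τc α) (τc t * (wd t - wr t) - 2 * αs * |τc t|) t :=
    hasDerivAt_lyapunov_of_dynamics hγ.ne' (hτc' t ▸ (hτc_diff t).hasDerivAt)
      (hα' t ▸ (hα_diff t).hasDerivAt)
  have hdecay : τc t * (wd t - wr t) - 2 * αs * |τc t| ≤ |τc t| * (R + D - 2 * αs) := by
    linarith [mul_sub_le_abs_mul_add (x := τc t) (hwr t) (hwd t)]
  have hrate : R + D - 2 * αs < 0 := by linarith
  refine ⟨hV.differentiableAt, hV.deriv ▸ hdecay,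
    mul_nonpos_of_nonneg_of_nonpos (abs_nonneg _) hrate.le, fun hne => ?_⟩
  show deriv (lyapunov γ αs τc α) t < 0
  rw [hV.deriv]
  exact hdecay.trans_lt (mul_neg_of_pos_of_neg (abs_pos.mpr hne) hrate)

/-- stability of the learning algorithm, Theorem 1: with
`τ_c' = −2α·sgn(τ_c) − w_r + w_d`, `α' = γ·|τ_c|`, bounds `|w_r| ≤ R`,
`|w_d| ≤ D` and `α* > R + D`, the Lyapunov function
`V = ½τ_c² + (1/γ)(α − α*)²` satisfies
`V' ≤ |τ_c|·(R + D − 2α*) ≤ 0`, with strict inequality whenever `τ_c ≠ 0`. -/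
theorem learning_algorithm_lyapunov
    (γ αs R D : ℝ) (hγ : 0 < γ) (hαs : 0 < αs) (hR : 0 ≤ R) (hD : 0 ≤ D)
    (hgain : R + D < αs)
    (τc α wr wd : ℝ → ℝ)
    (hτc_diff : Differentiable ℝ τc) (hα_diff : Differentiable ℝ α)
    (hwr : ∀ t, |wr t| ≤ R) (hwd : ∀ t, |wd t| ≤ D)
    (hτc' : ∀ t, deriv τc t = -2 * α t * Real.sign (τc t) - wr t + wd t)
    (hα' : ∀ t, deriv α t = γ * |τc t|) :
    ∀ t, DifferentiableAt ℝ (fun t => (1 / 2) * (τc t) ^ 2 + (1 / γ) * (α t - αs) ^ 2) t ∧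
      deriv (fun t => (1 / 2) * (τc t) ^ 2 + (1 / γ) * (α t - αs) ^ 2) t ≤
        |τc t| * (R + D - 2 * αs) ∧
      |τc t| * (R + D - 2 * αs) ≤ 0 ∧
      (τc t ≠ 0 →
        deriv (fun t => (1 / 2) * (τc t) ^ 2 + (1 / γ) * (α t - αs) ^ 2) t < 0) :=
  learning_algorithm_lyapunov_general γ αs R D hγ hαs hgain τc α wr wd hτc_diff hα_diff hwr hwd hτc'
    hα'
end

section
/- Let c > 0 and let τ : [0,∞) → ℝ be differentiable with τ(0) ≠ 0, and suppose that for every t ≥ 0 with τ(t) ≠ 0 one has τ'(t)·sgn(τ(t)) ≤ −c (equivalently, τ(t)·τ'(t) ≤ −c·|τ(t)|). Then there exists T with 0 < T ≤ |τ(0)|/c such that τ(T) = 0; i.e., τ reaches zero in finite time. -/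
/-!
While `τ ≠ 0`, the sliding condition says that `|τ|` is differentiable with derivative at most
`-c`. If `τ` had no zero in `(0, |τ 0| / c]`, the mean value inequality would then force
`|τ (|τ 0| / c)| ≤ |τ 0| - c · (|τ 0| / c) = 0`.
-/

open Set

theorem deriv_abs_le_of_mul_deriv_le {τ : ℝ → ℝ} {t c : ℝ} (hd : DifferentiableAt ℝ τ t)
    (hne : τ t ≠ 0) (hslide : τ t * deriv τ t ≤ -c * |τ t|) :
    deriv (fun s ↦ |τ s|) t ≤ -c := by
  have habs : HasDerivAt (fun s ↦ |τ s|) (SignType.sign (τ t) * deriv τ t) t :=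
    (hasDerivAt_abs hne).comp t hd.hasDerivAt
  rw [habs.deriv]
  refine le_of_mul_le_mul_right ?_ (abs_pos.mpr hne)
  calc SignType.sign (τ t) * deriv τ t * |τ t| = τ t * deriv τ t := by
        rw [mul_right_comm, sign_mul_abs]
    _ ≤ -c * |τ t| := hslide

theorem abs_le_abs_sub_mul_of_mul_deriv_le {τ : ℝ → ℝ} {a b c : ℝ} (hab : a ≤ b)
    (hdiff : ∀ t ∈ Icc a b, DifferentiableAt ℝ τ t) (hne : ∀ t ∈ Ioo a b, τ t ≠ 0)
    (hslide : ∀ t ∈ Ioo a b, τ t * deriv τ t ≤ -c * |τ t|) :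
    |τ b| ≤ |τ a| - c * (b - a) := by
  have hcont : ContinuousOn (fun s ↦ |τ s|) (Icc a b) :=
    fun t ht ↦ (hdiff t ht).continuousAt.abs.continuousWithinAt
  have hdiff' : DifferentiableOn ℝ (fun s ↦ |τ s|) (interior (Icc a b)) := by
    rw [interior_Icc]
    exact fun t ht ↦ ((hdiff t (Ioo_subset_Icc_self ht)).abs (hne t ht)).differentiableWithinAt
  have hderiv : ∀ t ∈ interior (Icc a b), deriv (fun s ↦ |τ s|) t ≤ -c := by
    rw [interior_Icc]
    exact fun t ht ↦
      deriv_abs_le_of_mul_deriv_le (hdiff t (Ioo_subset_Icc_self ht)) (hne t ht) (hslide t ht)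
  have hmvt := (convex_Icc a b).image_sub_le_mul_sub_of_deriv_le hcont hdiff' hderiv
    a (left_mem_Icc.mpr hab) b (right_mem_Icc.mpr hab) hab
  linarith

/-- finite-time reaching: if `c > 0`, `τ(0) ≠ 0`, `τ` is
differentiable on `[0,∞)` and `τ·τ' ≤ −c·|τ|` wherever `τ ≠ 0`, then `τ`
reaches zero at some time `T` with `0 < T ≤ |τ(0)|/c`. -/
theorem finite_time_reaching
    (c : ℝ) (hc : 0 < c) (τ : ℝ → ℝ)
    (hτ_diff : ∀ t ≥ (0 : ℝ), DifferentiableAt ℝ τ t)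
    (hτ0 : τ 0 ≠ 0)
    (hslide : ∀ t ≥ (0 : ℝ), τ t ≠ 0 → τ t * deriv τ t ≤ -c * |τ t|) :
    ∃ T : ℝ, 0 < T ∧ T ≤ |τ 0| / c ∧ τ T = 0 := by
  by_contra! hnever
  set T := |τ 0| / c
  have hT : 0 < T := div_pos (abs_pos.mpr hτ0) hc
  have hcT : c * T = |τ 0| := mul_div_cancel₀ _ hc.ne'
  have hne : ∀ t ∈ Ioo 0 T, τ t ≠ 0 := fun t ht ↦ hnever t ht.1 ht.2.le
  have hreach := abs_le_abs_sub_mul_of_mul_deriv_le hT.le (fun t ht ↦ hτ_diff t ht.1) hne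
    (fun t ht ↦ hslide t ht.1.le (hne t ht))
  exact hnever T hT le_rfl (abs_nonpos_iff.mp (by linarith))
end

section
/- Let a, b, r > 0 be real constants, let d, d̂_SL, d̂_BN, τ_n : ℝ → ℝ be functions with d, d̂_SL differentiable and d̂_BN twice differentiable, and define the disturbance error e_d(t) = d(t) − d̂_SL(t). Suppose the BNDO rate relation d̂_BN'(t) = a·e_d(t) holds and the SLDO estimation law holds: d̂_SL'(t) = (1 + r/a)·d̂_BN'(t) + (b/a)·d̂_BN''(t) − τ_n(t). Then e_d is differentiable and satisfies the SLDO error dynamics (1 + b)·e_d'(t) = −(a + r)·e_d(t) + τ_n(t) + d'(t), i.e. e_d'(t) = (−(a+r)·e_d(t) + τ_n(t) + d'(t)) / (1 + b). -/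
/-!
Differentiating the BNDO rate relation gives `d̂_BN'' = a·e_d'`, so after multiplying out the
factors `1/a` the estimation law reads `d̂_SL' = (a + r)·e_d + b·e_d' − τ_n`. Substituting
`d̂_SL' = d' − e_d'` and collecting the `e_d'` terms yields the error dynamics.
-/

theorem deriv_deriv_of_deriv_eq_smul {𝕜 F : Type*} [NontriviallyNormedField 𝕜]
    [NormedAddCommGroup F] [NormedSpace 𝕜 F] {f g : 𝕜 → F} {c : 𝕜}
    (hf : ∀ t, deriv f t = c • g t) {x : 𝕜} (hg : DifferentiableAt 𝕜 g x) :
    deriv (deriv f) x = c • deriv g x := by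
  rw [funext hf]
  exact deriv_const_smul c hg

theorem sldo_error_dynamics_general
    (a b r : ℝ) (ha : 0 < a) (hb : 0 < b)
    (d dSL dBN τn : ℝ → ℝ)
    (hd : Differentiable ℝ d) (hdSL : Differentiable ℝ dSL)
    (hBN : ∀ t, deriv dBN t = a * (d t - dSL t))
    (hSL : ∀ t, deriv dSL t =
      (1 + r / a) * deriv dBN t + (b / a) * deriv (deriv dBN) t - τn t) :
    Differentiable ℝ (fun t => d t - dSL t) ∧
    (∀ t, (1 + b) * deriv (fun t => d t - dSL t) t =
        -(a + r) * (d t - dSL t) + τn t + deriv d t) ∧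
    (∀ t, deriv (fun t => d t - dSL t) t =
        (-(a + r) * (d t - dSL t) + τn t + deriv d t) / (1 + b)) := by
  have he : Differentiable ℝ (fun t => d t - dSL t) := hd.sub hdSL
  have hde (t : ℝ) : deriv (fun t => d t - dSL t) t = deriv d t - deriv dSL t :=
    deriv_sub (hd t) (hdSL t)
  have hBN₂ (t : ℝ) : deriv (deriv dBN) t = a * deriv (fun t => d t - dSL t) t :=
    deriv_deriv_of_deriv_eq_smul hBN (he t)
  have hSL' (t : ℝ) : deriv dSL t =
      (a + r) * (d t - dSL t) + b * deriv (fun t => d t - dSL t) t - τn t := by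
    rw [hSL t, hBN t, hBN₂ t]
    field_simp
  have key (t : ℝ) : (1 + b) * deriv (fun t => d t - dSL t) t =
      -(a + r) * (d t - dSL t) + τn t + deriv d t := by
    have := hSL' t
    rw [hde t] at this ⊢
    linarith
  refine ⟨he, key, fun t => ?_⟩
  rw [eq_div_iff (by positivity)]
  linarith [key t]

/-- SLDO error dynamics: with `a, b, r > 0`, BNDO rate relation
`d̂_BN' = a·e_d` (where `e_d = d − d̂_SL`) and the SLDO estimation law
`d̂_SL' = (1 + r/a)·d̂_BN' + (b/a)·d̂_BN'' − τ_n`, the error satisfies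
`(1 + b)·e_d' = −(a + r)·e_d + τ_n + d'`. -/
theorem sldo_error_dynamics
    (a b r : ℝ) (ha : 0 < a) (hb : 0 < b) (hr : 0 < r)
    (d dSL dBN τn : ℝ → ℝ)
    (hd : Differentiable ℝ d) (hdSL : Differentiable ℝ dSL)
    (hdBN : Differentiable ℝ dBN) (hdBN' : Differentiable ℝ (deriv dBN))
    (hBN : ∀ t, deriv dBN t = a * (d t - dSL t))
    (hSL : ∀ t, deriv dSL t =
      (1 + r / a) * deriv dBN t + (b / a) * deriv (deriv dBN) t - τn t) :
    Differentiable ℝ (fun t => d t - dSL t) ∧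
    (∀ t, (1 + b) * deriv (fun t => d t - dSL t) t =
        -(a + r) * (d t - dSL t) + τn t + deriv d t) ∧
    (∀ t, deriv (fun t => d t - dSL t) t =
        (-(a + r) * (d t - dSL t) + τn t + deriv d t) / (1 + b)) :=
  sldo_error_dynamics_general a b r ha hb d dSL dBN τn hd hdSL hBN hSL
end

section
/- Let a, b, γ > 0 be real constants, r = a/b, and let D* ≥ 0, α* ∈ ℝ with α* > D*. Let e_d : [0,∞) → ℝ be twice differentiable, α : [0,∞) → ℝ differentiable, and w : [0,∞) → ℝ with |w(t)| ≤ D* for all t. Define the sliding surface s(t) = b·e_d'(t) + a·e_d(t), and suppose the closed-loop SLDO error dynamics hold: e_d''(t) = (−(a + r)·e_d'(t) − 2·α(t)·sgn(s(t)) + w(t)) / (1 + b), together with the learning-rate adaptation α'(t) = γ·|s(t)|, where sgn is the standard sign function (sgn(0)=0). Define the Lyapunov function V(t) = ½·s(t)² + (b/(γ·(1+b)))·(α(t) − α*)². Then V is differentiable and V'(t) ≤ |s(t)|·(b/(1+b))·(D* − 2·α*) ≤ 0 for all t; in particular V'(t) < 0 whenever s(t) ≠ 0. -/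
theorem surface_rate_of_closedLoop {a b r x y u : ℝ} (hb : b ≠ 0) (hb1 : 1 + b ≠ 0)
    (hr : r = a / b) (hy : y = (-(a + r) * x + u) / (1 + b)) :
    b * y + a * x = b / (1 + b) * u := by
  subst hr hy
  field_simp
  ring

theorem hasDerivAt_half_sq_add_mul_sq {s α : ℝ → ℝ} {s' α' c αs t : ℝ}
    (hs : HasDerivAt s s' t) (hα : HasDerivAt α α' t) :
    HasDerivAt (fun t => 1 / 2 * s t ^ 2 + c * (α t - αs) ^ 2)
      (s t * s' + 2 * c * (α t - αs) * α') t := by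
  refine (((hs.pow 2).const_mul (1 / 2)).add
    (((hα.sub_const αs).pow 2).const_mul c)).congr_deriv ?_
  push_cast
  ring

theorem mul_sub_abs_le {k s w D αs : ℝ} (hk : 0 ≤ k) (hw : |w| ≤ D) :
    k * (s * w - 2 * αs * |s|) ≤ |s| * k * (D - 2 * αs) := by
  have hsw : s * w ≤ |s| * D :=
    calc s * w ≤ |s * w| := le_abs_self _
      _ = |s| * |w| := abs_mul s w
      _ ≤ |s| * D := mul_le_mul_of_nonneg_left hw (abs_nonneg s)
  nlinarith

theorem sldo_lyapunov_general
    (a b γ Ds αs : ℝ) (hb : 0 < b) (hγ : 0 < γ)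
    (r : ℝ) (hr : r = a / b) (hDs : 0 ≤ Ds) (hαs : Ds < αs)
    (ed α w : ℝ → ℝ)
    (hed : Differentiable ℝ ed) (hed' : Differentiable ℝ (deriv ed))
    (hα : Differentiable ℝ α)
    (hw : ∀ t, |w t| ≤ Ds)
    (hdyn : ∀ t, deriv (deriv ed) t =
      (-(a + r) * deriv ed t -
        2 * α t * Real.sign (b * deriv ed t + a * ed t) + w t) / (1 + b))
    (hα' : ∀ t, deriv α t = γ * |b * deriv ed t + a * ed t|) :
    ∀ t, DifferentiableAt ℝ
        (fun t => (1 / 2) * (b * deriv ed t + a * ed t) ^ 2 +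
          (b / (γ * (1 + b))) * (α t - αs) ^ 2) t ∧
      deriv (fun t => (1 / 2) * (b * deriv ed t + a * ed t) ^ 2 +
          (b / (γ * (1 + b))) * (α t - αs) ^ 2) t ≤
        |b * deriv ed t + a * ed t| * (b / (1 + b)) * (Ds - 2 * αs) ∧
      |b * deriv ed t + a * ed t| * (b / (1 + b)) * (Ds - 2 * αs) ≤ 0 ∧
      (b * deriv ed t + a * ed t ≠ 0 →
        deriv (fun t => (1 / 2) * (b * deriv ed t + a * ed t) ^ 2 +
          (b / (γ * (1 + b))) * (α t - αs) ^ 2) t < 0) := by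
  intro t
  have hb1 : 0 < 1 + b := by linarith
  have hk : 0 < b / (1 + b) := div_pos hb hb1
  have hgap : Ds - 2 * αs < 0 := by linarith
  set S := b * deriv ed t + a * ed t with hS
  have hsurf : b * deriv (deriv ed) t + a * deriv ed t =
      b / (1 + b) * (w t - 2 * α t * S.sign) :=
    surface_rate_of_closedLoop hb.ne' hb1.ne' hr (by rw [hdyn t]; ring)
  have hV : HasDerivAt (fun t => (1 / 2) * (b * deriv ed t + a * ed t) ^ 2 +
      (b / (γ * (1 + b))) * (α t - αs) ^ 2)
      (S * (b * deriv (deriv ed) t + a * deriv ed t) +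
        2 * (b / (γ * (1 + b))) * (α t - αs) * deriv α t) t :=
    hasDerivAt_half_sq_add_mul_sq
      (((hed' t).hasDerivAt.const_mul b).add ((hed t).hasDerivAt.const_mul a)) (hα t).hasDerivAt
  have hrate : deriv (fun t => (1 / 2) * (b * deriv ed t + a * ed t) ^ 2 +
      (b / (γ * (1 + b))) * (α t - αs) ^ 2) t = b / (1 + b) * (S * w t - 2 * αs * |S|) := by
    rw [hV.deriv, hsurf, hα' t, ← hS, ← Real.self_mul_sign]
    field_simp
    ring
  have hbound := hrate ▸ mul_sub_abs_le (s := S) hk.le (hw t)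
  refine ⟨hV.differentiableAt, hbound,
    mul_nonpos_of_nonneg_of_nonpos (by positivity) hgap.le, fun hS0 => ?_⟩
  exact hbound.trans_lt (mul_neg_of_pos_of_neg (mul_pos (abs_pos.2 hS0) hk) hgap)

/-- stability of the SLDO, Theorem 2: with `a, b, γ > 0`,
`r = a/b`, disturbance acceleration bound `|w| ≤ D*`, `α* > D*`, sliding
surface `s = b·e_d' + a·e_d`, closed-loop error dynamics
`e_d'' = (−(a+r)e_d' − 2α·sgn(s) + w)/(1+b)` and adaptation `α' = γ|s|`, the
Lyapunov function `V = ½s² + (b/(γ(1+b)))(α − α*)²` satisfies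
`V' ≤ |s|·(b/(1+b))·(D* − 2α*) ≤ 0`, strictly whenever `s ≠ 0`. -/
theorem sldo_lyapunov
    (a b γ Ds αs : ℝ) (ha : 0 < a) (hb : 0 < b) (hγ : 0 < γ)
    (r : ℝ) (hr : r = a / b) (hDs : 0 ≤ Ds) (hαs : Ds < αs)
    (ed α w : ℝ → ℝ)
    (hed : Differentiable ℝ ed) (hed' : Differentiable ℝ (deriv ed))
    (hα : Differentiable ℝ α)
    (hw : ∀ t, |w t| ≤ Ds)
    (hdyn : ∀ t, deriv (deriv ed) t =
      (-(a + r) * deriv ed t -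
        2 * α t * Real.sign (b * deriv ed t + a * ed t) + w t) / (1 + b))
    (hα' : ∀ t, deriv α t = γ * |b * deriv ed t + a * ed t|) :
    ∀ t, DifferentiableAt ℝ
        (fun t => (1 / 2) * (b * deriv ed t + a * ed t) ^ 2 +
          (b / (γ * (1 + b))) * (α t - αs) ^ 2) t ∧
      deriv (fun t => (1 / 2) * (b * deriv ed t + a * ed t) ^ 2 +
          (b / (γ * (1 + b))) * (α t - αs) ^ 2) t ≤
        |b * deriv ed t + a * ed t| * (b / (1 + b)) * (Ds - 2 * αs) ∧
      |b * deriv ed t + a * ed t| * (b / (1 + b)) * (Ds - 2 * αs) ≤ 0 ∧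
      (b * deriv ed t + a * ed t ≠ 0 →
        deriv (fun t => (1 / 2) * (b * deriv ed t + a * ed t) ^ 2 +
          (b / (γ * (1 + b))) * (α t - αs) ^ 2) t < 0) :=
  sldo_lyapunov_general a b γ Ds αs hb hγ r hr hDs hαs ed α w hed hed' hα hw hdyn hα'
end
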